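/- arXiv:1206.5045 — 3 statements merged into one kernel-verified Lean document; each statement's English description precedes it below -/
import Mathlib

section
/- Let a₁, a₂ ∈ ℝ and z₁, z₂ ∈ ℂ with a₁² + |z₁|² = 1 = a₂² + |z₂|², and suppose 1/4 ≤ a₁, a₂ and |z₁|, |z₂| ≤ √15/4. If |z₁ - z₂| ≥ 15²·64·8·c₀ for some c₀ > 0, then |a₁z₂ - a₂z₁| ≥ 16·c₀. -/
/-!
Expanding both norms, `‖a₁ z₂ - a₂ z₁‖² - a₁ a₂ ‖z₁ - z₂‖² = (a₁ - a₂)(a₁‖z₂‖² - a₂‖z₁‖²)`, and on the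
sphere `a₁‖z₂‖² - a₂‖z₁‖² = (a₁ - a₂)(1 + a₁ a₂)`. As `|a₁ a₂| ≤ 1`, `‖a₁ z₂ - a₂ z₁‖² ≥ a₁ a₂ ‖z₁ - z₂‖²`, so with
`a₁, a₂ ≥ 1/4` the cross term is at least `‖z₁ - z₂‖ / 4`.
-/

section InnerProductSpace

variable {E : Type*} [NormedAddCommGroup E] [InnerProductSpace ℝ E]

theorem norm_smul_sub_smul_sq_of_sphere {a₁ a₂ : ℝ} {z₁ z₂ : E}
    (hn₁ : a₁ ^ 2 + ‖z₁‖ ^ 2 = 1) (hn₂ : a₂ ^ 2 + ‖z₂‖ ^ 2 = 1) :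
    ‖a₁ • z₂ - a₂ • z₁‖ ^ 2 = (a₁ - a₂) ^ 2 * (1 + a₁ * a₂) + a₁ * a₂ * ‖z₁ - z₂‖ ^ 2 := by
  rw [norm_sub_sq_real, norm_sub_sq_real, norm_smul, norm_smul, real_inner_smul_left,
    real_inner_smul_right, real_inner_comm, Real.norm_eq_abs, Real.norm_eq_abs, mul_pow, mul_pow,
    sq_abs, sq_abs]
  linear_combination (a₁ - a₂) * a₁ * hn₂ - (a₁ - a₂) * a₂ * hn₁

theorem mul_mul_norm_sub_sq_le_norm_smul_sub_smul_sq_of_sphere {a₁ a₂ : ℝ} {z₁ z₂ : E}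
    (hn₁ : a₁ ^ 2 + ‖z₁‖ ^ 2 = 1) (hn₂ : a₂ ^ 2 + ‖z₂‖ ^ 2 = 1) :
    a₁ * a₂ * ‖z₁ - z₂‖ ^ 2 ≤ ‖a₁ • z₂ - a₂ • z₁‖ ^ 2 := by
  have h_prod : -1 ≤ a₁ * a₂ := by
    nlinarith [sq_nonneg (a₁ + a₂), sq_nonneg ‖z₁‖, sq_nonneg ‖z₂‖]
  rw [norm_smul_sub_smul_sq_of_sphere hn₁ hn₂]
  nlinarith [sq_nonneg (a₁ - a₂)]

theorem norm_sub_div_four_le_norm_smul_sub_smul {a₁ a₂ : ℝ} {z₁ z₂ : E}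
    (hn₁ : a₁ ^ 2 + ‖z₁‖ ^ 2 = 1) (hn₂ : a₂ ^ 2 + ‖z₂‖ ^ 2 = 1)
    (ha₁ : 1 / 4 ≤ a₁) (ha₂ : 1 / 4 ≤ a₂) :
    ‖z₁ - z₂‖ / 4 ≤ ‖a₁ • z₂ - a₂ • z₁‖ := by
  have h_prod : 1 / 16 ≤ a₁ * a₂ := by nlinarith
  have h_sq : (‖z₁ - z₂‖ / 4) ^ 2 ≤ ‖a₁ • z₂ - a₂ • z₁‖ ^ 2 := by
    nlinarith [mul_mul_norm_sub_sq_le_norm_smul_sub_smul_sq_of_sphere hn₁ hn₂,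
      sq_nonneg ‖z₁ - z₂‖]
  exact (pow_le_pow_iff_left₀ (by positivity) (norm_nonneg _) two_ne_zero).mp h_sq

end InnerProductSpace

theorem sphere_cross_term_separation_general
    (a₁ a₂ : ℝ) (z₁ z₂ : ℂ) (c₀ : ℝ) (hc₀ : 0 < c₀)
    (hn₁ : a₁ ^ 2 + ‖z₁‖ ^ 2 = 1)
    (hn₂ : a₂ ^ 2 + ‖z₂‖ ^ 2 = 1)
    (ha₁ : 1 / 4 ≤ a₁) (ha₂ : 1 / 4 ≤ a₂)
    (hsep : 15 ^ 2 * 64 * 8 * c₀ ≤ ‖z₁ - z₂‖) :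
    16 * c₀ ≤ ‖(a₁ : ℂ) * z₂ - (a₂ : ℂ) * z₁‖ := by
  have h_cross := norm_sub_div_four_le_norm_smul_sub_smul hn₁ hn₂ ha₁ ha₂
  rw [Complex.real_smul, Complex.real_smul] at h_cross
  linarith

/-- Quantitative separation estimate on the sphere
`{(a, z) ∈ ℝ × ℂ : a² + |z|² = 1}`: if both points lie in the band
`1/4 ≤ a, |z| ≤ √15/4` and their `z`-coordinates are at least
`15²·64·8·c₀` apart, then `|a₁z₂ - a₂z₁| ≥ 16 c₀`. -/
theorem sphere_cross_term_separation
    (a₁ a₂ : ℝ) (z₁ z₂ : ℂ) (c₀ : ℝ) (hc₀ : 0 < c₀)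
    (hn₁ : a₁ ^ 2 + ‖z₁‖ ^ 2 = 1)
    (hn₂ : a₂ ^ 2 + ‖z₂‖ ^ 2 = 1)
    (ha₁ : 1 / 4 ≤ a₁) (ha₂ : 1 / 4 ≤ a₂)
    (ha₁' : a₁ ≤ Real.sqrt 15 / 4) (ha₂' : a₂ ≤ Real.sqrt 15 / 4)
    (hz₁l : 1 / 4 ≤ ‖z₁‖) (hz₂l : 1 / 4 ≤ ‖z₂‖)
    (hz₁ : ‖z₁‖ ≤ Real.sqrt 15 / 4)
    (hz₂ : ‖z₂‖ ≤ Real.sqrt 15 / 4)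
    (hsep : 15 ^ 2 * 64 * 8 * c₀ ≤ ‖z₁ - z₂‖) :
    16 * c₀ ≤ ‖(a₁ : ℂ) * z₂ - (a₂ : ℂ) * z₁‖ :=
  sphere_cross_term_separation_general a₁ a₂ z₁ z₂ c₀ hc₀ hn₁ hn₂ ha₁ ha₂ hsep
end

section
/- Let v = (v₁, v₂, v₃) ∈ ℂ³ with |v₁| ≤ (3/2)c₀ and |v₂| > 1/4, and let a₁, a₂ ∈ ℝ, z₁, z₂ ∈ ℂ with aᵢ² + |zᵢ|² = 1, 1/4 ≤ aᵢ, |zᵢ| ≤ √15/4, and |a₁z₂ - a₂z₁| ≥ 16c₀. Then the first coordinate of h(a₁,z₁)⁻¹h(a₂,z₂)·v has absolute value greater than (5/2)c₀, where h(a,z) is the 3×3 matrix with first row (a, z, 0), second row (-z̄, a, 0), third row (0, 0, 1). -/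
open Matrix

/-- The rotation-like matrix `h(a, z) ∈ SU(3)` used in Example 8.1. -/
noncomputable def rotMat (a : ℝ) (z : ℂ) : Matrix (Fin 3) (Fin 3) ℂ :=
  !![(a : ℂ), z, 0; -(starRingEnd ℂ z), (a : ℂ), 0; 0, 0, 1]

/-!
`h(a, z)` is unitary, so `h(a₁, z₁)⁻¹ h(a₂, z₂)` has first row
`(a₁a₂ + z₁z̄₂, a₁z₂ - a₂z₁, 0)`. The first entry has modulus at most `1` by Cauchy–Schwarz for the
unit vectors `(a₁, z₁)`, `(a₂, z₂)`, so the term `(a₁z₂ - a₂z₁) v₂`, of modulus `> 4c₀`, dominates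
`(a₁a₂ + z₁z̄₂) v₁`, of modulus `≤ (3/2)c₀`.
-/

theorem norm_mul_add_mul_le_one {R : Type*} [SeminormedRing R] {x₁ x₂ y₁ y₂ : R}
    (h₁ : ‖x₁‖ ^ 2 + ‖y₁‖ ^ 2 = 1) (h₂ : ‖x₂‖ ^ 2 + ‖y₂‖ ^ 2 = 1) :
    ‖x₁ * x₂ + y₁ * y₂‖ ≤ 1 :=
  calc ‖x₁ * x₂ + y₁ * y₂‖ ≤ ‖x₁‖ * ‖x₂‖ + ‖y₁‖ * ‖y₂‖ :=
        (norm_add_le _ _).trans (add_le_add (norm_mul_le _ _) (norm_mul_le _ _))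
    _ ≤ 1 := by nlinarith [sq_nonneg (‖x₁‖ - ‖x₂‖), sq_nonneg (‖y₁‖ - ‖y₂‖)]

theorem rotMat_conjTranspose_mul_self {a : ℝ} {z : ℂ} (h : a ^ 2 + ‖z‖ ^ 2 = 1) :
    (rotMat a z)ᴴ * rotMat a z = 1 := by
  have hz : z * starRingEnd ℂ z = 1 - (a : ℂ) ^ 2 := by
    rw [Complex.mul_conj, Complex.normSq_eq_norm_sq, eq_sub_iff_add_eq, add_comm]
    exact_mod_cast h
  ext i j
  fin_cases i <;> fin_cases j <;>
    simp [rotMat, mul_apply, Fin.sum_univ_three] <;> first | ring1 | linear_combination hz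

theorem rotMat_inv_mul_rotMat_mulVec_zero {a₁ a₂ : ℝ} {z₁ z₂ : ℂ}
    (hn₁ : a₁ ^ 2 + ‖z₁‖ ^ 2 = 1) (v : Fin 3 → ℂ) :
    (((rotMat a₁ z₁)⁻¹ * rotMat a₂ z₂) *ᵥ v) 0 =
      ((a₁ : ℂ) * a₂ + z₁ * starRingEnd ℂ z₂) * v 0 + ((a₁ : ℂ) * z₂ - (a₂ : ℂ) * z₁) * v 1 := by
  rw [inv_eq_left_inv (rotMat_conjTranspose_mul_self hn₁)]
  simp [rotMat, mulVec, mul_apply, dotProduct, Fin.sum_univ_three,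
    -mul_eq_mul_right_iff]
  ring

theorem rotated_first_coordinate_large_general
    (v : Fin 3 → ℂ) (c₀ : ℝ) (hc₀ : 0 < c₀)
    (hv₁ : ‖v 0‖ ≤ 3 / 2 * c₀)
    (hv₂ : 1 / 4 < ‖v 1‖)
    (a₁ a₂ : ℝ) (z₁ z₂ : ℂ)
    (hn₁ : a₁ ^ 2 + ‖z₁‖ ^ 2 = 1)
    (hn₂ : a₂ ^ 2 + ‖z₂‖ ^ 2 = 1)
    (hcross : 16 * c₀ ≤ ‖(a₁ : ℂ) * z₂ - (a₂ : ℂ) * z₁‖) :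
    5 / 2 * c₀ <
      ‖(((rotMat a₁ z₁)⁻¹ * rotMat a₂ z₂) *ᵥ v) 0‖ := by
  rw [rotMat_inv_mul_rotMat_mulVec_zero hn₁]
  set A : ℂ := (a₁ : ℂ) * a₂ + z₁ * starRingEnd ℂ z₂
  set B : ℂ := (a₁ : ℂ) * z₂ - (a₂ : ℂ) * z₁
  have hA : ‖A‖ ≤ 1 :=
    norm_mul_add_mul_le_one (by simpa using hn₁) (by simpa using hn₂)
  have hAv : ‖A * v 0‖ ≤ 3 / 2 * c₀ := by
    rw [norm_mul]
    nlinarith [norm_nonneg A, norm_nonneg (v 0)]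
  have hBv : 4 * c₀ < ‖B * v 1‖ := by
    rw [norm_mul]
    nlinarith
  calc 5 / 2 * c₀ < ‖B * v 1‖ - ‖A * v 0‖ := by linarith
    _ ≤ ‖A * v 0 + B * v 1‖ := by
      rw [add_comm]
      exact norm_sub_le_norm_add _ _

/-- Disjointness estimate for rotated sets: if `|v₁| ≤ (3/2)c₀`, `|v₂| > 1/4`
and `|a₁z₂ - a₂z₁| ≥ 16 c₀`, then the first coordinate of
`h(a₁,z₁)⁻¹ h(a₂,z₂) · v` has absolute value greater than `(5/2) c₀`. -/
theorem rotated_first_coordinate_large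
    (v : Fin 3 → ℂ) (c₀ : ℝ) (hc₀ : 0 < c₀)
    (hv₁ : ‖v 0‖ ≤ 3 / 2 * c₀)
    (hv₂ : 1 / 4 < ‖v 1‖)
    (a₁ a₂ : ℝ) (z₁ z₂ : ℂ)
    (hn₁ : a₁ ^ 2 + ‖z₁‖ ^ 2 = 1)
    (hn₂ : a₂ ^ 2 + ‖z₂‖ ^ 2 = 1)
    (ha₁ : 1 / 4 ≤ a₁) (ha₂ : 1 / 4 ≤ a₂)
    (hz₁ : ‖z₁‖ ≤ Real.sqrt 15 / 4)
    (hz₂ : ‖z₂‖ ≤ Real.sqrt 15 / 4)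
    (hcross : 16 * c₀ ≤ ‖(a₁ : ℂ) * z₂ - (a₂ : ℂ) * z₁‖) :
    5 / 2 * c₀ <
      ‖(((rotMat a₁ z₁)⁻¹ * rotMat a₂ z₂) *ᵥ v) 0‖ :=
  rotated_first_coordinate_large_general v c₀ hc₀ hv₁ hv₂ a₁ a₂ z₁ z₂ hn₁ hn₂ hcross
end

section
/- Let π be a unitary representation of a group G on a Hilbert space, K a compact subgroup with normalized Haar measure, and Ξ : G → (0,1] a function with Ξ(h) < 1 for some fixed h ∈ G, such that |⟨π(g)w, w⟩| ≤ Ξ(g) for all K-invariant unit vectors w. Set κ = √(2(1-Ξ(h))) / (√(2(1-Ξ(h))) + 3). Then for every unit vector ν, max over s ∈ K ∪ {h} of ‖π(s)ν - ν‖ ≥ κ. -/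
/-!
Instead of the Haar average `∫_K π(k)ν dk`, take the point `m` of least norm in the closed convex
hull of the orbit `π(K)ν`. Every `π(k)`, `k ∈ K`, is an isometry preserving this set, so `π(k)m` has
least norm too, and equals `m` by strict convexity of the norm. If `K` moves `ν` by less than `κ`,
then `‖m - ν‖ ≤ κ`, hence `‖m‖ ≥ 1 - κ`. With `a = √(2(1 - Ξ h))`, the bound on matrix
coefficients at the invariant vector `m` gives `‖π(h)m - m‖ ≥ a‖m‖ ≥ a(1 - κ) = 3κ`, while the
triangle inequality gives `‖π(h)m - m‖ ≤ ‖π(h)ν - ν‖ + 2κ`; so `h` moves `ν` by at least `κ`.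
-/

open scoped InnerProductSpace
open Set RCLike

theorem Convex.eq_of_isMinOn_norm {E : Type*} [NormedAddCommGroup E] [NormedSpace ℝ E]
    [StrictConvexSpace ℝ E] {C : Set E} (hC : Convex ℝ C) {m x : E} (hm : IsMinOn norm C m)
    (hx : x ∈ C) (hmC : m ∈ C) (hxm : ‖x‖ = ‖m‖) : x = m := by
  by_contra hne
  have hmid : (1 / 2 : ℝ) • (x + m) ∈ C := by
    simpa [midpoint_eq_smul_add] using hC.midpoint_mem hx hmC
  exact ((norm_midpoint_lt_iff hxm).2 hne).not_ge (hxm ▸ isMinOn_iff.1 hm _ hmid)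

theorem exists_isMinOn_norm {E : Type*} [NormedAddCommGroup E] [InnerProductSpace ℝ E]
    {C : Set E} (hne : C.Nonempty) (hC : IsComplete C) (hconv : Convex ℝ C) :
    ∃ m ∈ C, IsMinOn norm C m := by
  obtain ⟨m, hmC, hm⟩ := exists_norm_eq_iInf_of_complete_convex hne hC hconv 0
  refine ⟨m, hmC, isMinOn_iff.2 fun x hx => ?_⟩
  simp only [zero_sub, norm_neg] at hm
  rw [hm]
  exact ciInf_le ⟨0, forall_mem_range.2 fun _ => norm_nonneg _⟩ (⟨x, hx⟩ : C)

theorem Set.MapsTo.closedConvexHull {𝕜 E F : Type*} [Semiring 𝕜] [PartialOrder 𝕜]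
    [AddCommGroup E] [Module 𝕜 E] [TopologicalSpace E]
    [AddCommGroup F] [Module 𝕜 F] [TopologicalSpace F]
    {f : E →L[𝕜] F} {s : Set E} {t : Set F} (h : MapsTo f s t) :
    MapsTo f (closedConvexHull 𝕜 s) (closedConvexHull 𝕜 t) :=
  closedConvexHull_min (h.mono_right subset_closedConvexHull)
    (convex_closedConvexHull.linear_preimage f.toLinearMap)
    (isClosed_closedConvexHull.preimage f.continuous)

theorem Isometry.dist_apply_self_le {α : Type*} [PseudoMetricSpace α] {f : α → α}
    (hf : Isometry f) (x y : α) : dist (f x) x ≤ dist (f y) y + 2 * dist x y := by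
  calc dist (f x) x ≤ dist (f x) (f y) + dist (f y) y + dist y x := dist_triangle4 _ _ _ _
    _ = dist (f y) y + 2 * dist x y := by rw [hf.dist_eq, dist_comm y x]; ring

section InnerProductSpace

variable {𝕜 E : Type*} [RCLike 𝕜] [NormedAddCommGroup E] [InnerProductSpace 𝕜 E]

theorem sqrt_mul_norm_le_norm_sub_of_norm_eq {u w : E} (huw : ‖u‖ = ‖w‖) {c : ℝ}
    (hc : ‖⟪u, w⟫_𝕜‖ ≤ c * ‖w‖ ^ 2) : √(2 * (1 - c)) * ‖w‖ ≤ ‖u - w‖ := by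
  have hsq : ‖u - w‖ ^ 2 = 2 * ‖w‖ ^ 2 - 2 * re ⟪u, w⟫_𝕜 := by
    rw [norm_sub_sq (𝕜 := 𝕜), huw]; ring
  have hre : re ⟪u, w⟫_𝕜 ≤ c * ‖w‖ ^ 2 := (re_le_norm _).trans hc
  calc √(2 * (1 - c)) * ‖w‖ = √(2 * (1 - c) * ‖w‖ ^ 2) := by
        rw [Real.sqrt_mul' _ (sq_nonneg _), Real.sqrt_sq (norm_nonneg _)]
    _ ≤ √(‖u - w‖ ^ 2) := Real.sqrt_le_sqrt (by rw [hsq]; linarith)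
    _ = ‖u - w‖ := Real.sqrt_sq (norm_nonneg _)

variable {G : Type*} [Group G]

theorem exists_invariant_norm_sub_le [CompleteSpace E] (π : G →* (E ≃ₗᵢ[𝕜] E))
    (K : Subgroup G) {ν : E} {ε : ℝ} (hν : ∀ k ∈ K, ‖π k ν - ν‖ ≤ ε) :
    ∃ m, (∀ k ∈ K, π k m = m) ∧ ‖m - ν‖ ≤ ε := by
  let _ := InnerProductSpace.rclikeToReal 𝕜 E
  set C := closedConvexHull ℝ ((fun k : G => π k ν) '' K)
  have hνC : ν ∈ C := subset_closedConvexHull ⟨1, K.one_mem, by simp⟩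
  have hC_ball : C ⊆ Metric.closedBall ν ε := by
    refine closedConvexHull_min ?_ (convex_closedBall ν ε) Metric.isClosed_closedBall
    rintro _ ⟨k, hk, rfl⟩
    simpa [dist_eq_norm] using hν k hk
  obtain ⟨m, hmC, hmin⟩ :=
    exists_isMinOn_norm ⟨ν, hνC⟩ isClosed_closedConvexHull.isComplete convex_closedConvexHull
  refine ⟨m, fun k hk => ?_, by simpa [dist_eq_norm] using hC_ball hmC⟩
  have hC_maps : MapsTo (π k) C C :=
    MapsTo.closedConvexHull (f := ((π k).toContinuousLinearEquiv : E →L[𝕜] E).restrictScalars ℝ)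
      (by rintro _ ⟨k', hk', rfl⟩; exact ⟨k * k', K.mul_mem hk hk', by simp⟩)
  exact convex_closedConvexHull.eq_of_isMinOn_norm hmin (hC_maps hmC) hmC ((π k).norm_map m)

theorem sqrt_mul_norm_le_norm_map_sub (π : G →* (E ≃ₗᵢ[𝕜] E)) (K : Subgroup G) (Ξ : G → ℝ)
    (hbound : ∀ w : E, ‖w‖ = 1 → (∀ k ∈ K, π k w = w) → ∀ g : G, ‖⟪π g w, w⟫_𝕜‖ ≤ Ξ g)
    {w : E} (hw : ∀ k ∈ K, π k w = w) (g : G) : √(2 * (1 - Ξ g)) * ‖w‖ ≤ ‖π g w - w‖ := by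
  refine sqrt_mul_norm_le_norm_sub_of_norm_eq (𝕜 := 𝕜) ((π g).norm_map w) ?_
  rcases eq_or_ne w 0 with rfl | hw0
  · simp
  set u := ((‖w‖⁻¹ : ℝ) : 𝕜) • w
  have hu : ‖u‖ = 1 := by
    rw [norm_smul, norm_ofReal, abs_inv, abs_norm, inv_mul_cancel₀ (norm_ne_zero_iff.2 hw0)]
  have hu_inv : ∀ k ∈ K, π k u = u := fun k hk => by rw [map_smul, hw k hk]
  have hw_eq : w = ((‖w‖ : ℝ) : 𝕜) • u := by
    rw [smul_smul, ← ofReal_mul, mul_inv_cancel₀ (norm_ne_zero_iff.2 hw0), ofReal_one, one_smul]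
  calc ‖⟪π g w, w⟫_𝕜‖ = ‖w‖ ^ 2 * ‖⟪π g u, u⟫_𝕜‖ := by
        conv_lhs => rw [hw_eq]
        rw [map_smul, inner_smul_left, inner_smul_right, norm_mul, norm_mul, RCLike.norm_conj,
          norm_ofReal, abs_norm]; ring
    _ ≤ ‖w‖ ^ 2 * Ξ g := by gcongr; exact hbound u hu hu_inv g
    _ = Ξ g * ‖w‖ ^ 2 := mul_comm _ _

end InnerProductSpace

theorem kazhdan_constant_estimate_general
    {G : Type*} [Group G]
    {H : Type*} [NormedAddCommGroup H] [InnerProductSpace ℂ H] [CompleteSpace H]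
    (π : G →* (H ≃ₗᵢ[ℂ] H))
    (K : Subgroup G)
    (h : G)
    (Ξ : G → ℝ)
    (hbound : ∀ w : H, ‖w‖ = 1 → (∀ k ∈ K, π k w = w) →
      ∀ g : G, ‖⟪π g w, w⟫_ℂ‖ ≤ Ξ g) :
    ∀ ν : H, ‖ν‖ = 1 →
      ∃ s ∈ insert h (K : Set G),
        Real.sqrt (2 * (1 - Ξ h)) / (Real.sqrt (2 * (1 - Ξ h)) + 3)
          ≤ ‖π s ν - ν‖ := by
  intro ν hν
  set a := √(2 * (1 - Ξ h))
  have ha : 0 ≤ a := Real.sqrt_nonneg _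
  set κ := a / (a + 3)
  by_contra! hfar
  obtain ⟨m, hm_inv, hmν⟩ :=
    exists_invariant_norm_sub_le π K fun k hk => (hfar k (mem_insert_of_mem h hk)).le
  have hm_moved : a * ‖m‖ ≤ ‖π h m - m‖ := sqrt_mul_norm_le_norm_map_sub π K Ξ hbound hm_inv h
  have hm_moved_le : ‖π h m - m‖ ≤ ‖π h ν - ν‖ + 2 * ‖m - ν‖ := by
    simpa only [dist_eq_norm] using (π h).isometry.dist_apply_self_le m ν
  have hm_norm : 1 - κ ≤ ‖m‖ := by
    have := norm_sub_norm_le ν m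
    rw [norm_sub_rev] at hmν
    linarith
  have hκ : a * (1 - κ) = 3 * κ := by
    simp only [κ]
    field_simp
    ring
  linarith [hfar h (mem_insert h _), mul_le_mul_of_nonneg_left hm_norm ha]

/-- Kazhdan constant estimate: if all diagonal matrix coefficients of a unitary
representation `π` at `K`-invariant unit vectors are bounded by `Ξ`, and
`Ξ h < 1`, then every unit vector is moved by at least
`κ = √(2(1-Ξ h)) / (√(2(1-Ξ h)) + 3)` by some element of `K ∪ {h}`. -/
theorem kazhdan_constant_estimate
    {G : Type*} [Group G] [TopologicalSpace G] [IsTopologicalGroup G]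
    {H : Type*} [NormedAddCommGroup H] [InnerProductSpace ℂ H] [CompleteSpace H]
    (π : G →* (H ≃ₗᵢ[ℂ] H))
    (hcont : ∀ v : H, Continuous fun g : G => π g v)
    (K : Subgroup G) (hK : IsCompact (K : Set G))
    (h : G)
    (Ξ : G → ℝ) (hΞpos : ∀ g, 0 < Ξ g) (hΞle : ∀ g, Ξ g ≤ 1) (hΞh : Ξ h < 1)
    (hbound : ∀ w : H, ‖w‖ = 1 → (∀ k ∈ K, π k w = w) →
      ∀ g : G, ‖⟪π g w, w⟫_ℂ‖ ≤ Ξ g) :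
    ∀ ν : H, ‖ν‖ = 1 →
      ∃ s ∈ insert h (K : Set G),
        Real.sqrt (2 * (1 - Ξ h)) / (Real.sqrt (2 * (1 - Ξ h)) + 3)
          ≤ ‖π s ν - ν‖ :=
  kazhdan_constant_estimate_general π K h Ξ hbound
end
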